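/- For nonnegative integers a, b, c, d: ∑_{k=d}^{min(b, c+d)} q^{(b-k)(c+d-k)} · C_q(b, k) · C_q(c, k−d) · C_q(a+k, b+c) = C_q(a, b−d) · C_q(a+d, c+d). -/

import Mathlib

/-!
Write `C = C_q`. Split `a + k = (a + d) + (k - d)` and expand `C(a + k, b + c)` by the
q-Vandermonde convolution over `j`. The trinomial revision
`C(c, k - d) C(k - d, b + c - j) = C(c, b + c - j) C(j - b, c + d - k)` decouples `k` from the
rest, so after exchanging the sums the inner sum over `k` is again a q-Vandermonde convolution,
equal to `C(j, c + d)`. A second trinomial revision turns `C(a + d, j) C(j, c + d)` into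
`C(a + d, c + d) C(a - c, j - c - d)`, and the remaining sum over `j` is the q-Vandermonde
expansion of `C(a, b - d)`.
-/

open Finset

/-- The q-Pochhammer symbol `(a;q)_n = ∏_{j=0}^{n-1} (1 - a q^j)`. -/
noncomputable def qPoch (q a : RatFunc ℚ) (n : ℕ) : RatFunc ℚ :=
  ∏ j ∈ Finset.range n, (1 - a * q ^ j)

/-- The Gaussian (q-binomial) coefficient `C_q(m, k)`, defined as
`(q;q)_m / ((q;q)_k (q;q)_{m-k})` for `0 ≤ k ≤ m`, and `0` otherwise. -/
noncomputable def qBinom (q : RatFunc ℚ) (m k : ℤ) : RatFunc ℚ :=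
  if 0 ≤ k ∧ k ≤ m then
    qPoch q q m.toNat / (qPoch q q k.toNat * qPoch q q (m - k).toNat)
  else 0

theorem RatFunc.X_pow_succ_ne_one {K : Type*} [CommRing K] [IsDomain K] (n : ℕ) :
    (X : RatFunc K) ^ (n + 1) ≠ 1 := fun h =>
  transcendental_X (IsIntegral.of_pow n.succ_pos (h ▸ isIntegral_one)).isAlgebraic

section QBinom

variable {q : RatFunc ℚ}

theorem qPoch_zero (a : RatFunc ℚ) : qPoch q a 0 = 1 := prod_range_zero _

theorem qPoch_self_succ (n : ℕ) : qPoch q q (n + 1) = qPoch q q n * (1 - q ^ (n + 1)) := by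
  rw [qPoch, qPoch, prod_range_succ, pow_succ']

theorem qPoch_ne_zero (hq : ∀ n : ℕ, q ^ (n + 1) ≠ 1) (n : ℕ) : qPoch q q n ≠ 0 :=
  prod_ne_zero_iff.2 fun j _ => by
    rw [← pow_succ', sub_ne_zero]; exact (hq j).symm

theorem qBinom_eq_zero_of_neg {m k : ℤ} (hk : k < 0) : qBinom q m k = 0 :=
  if_neg fun h => hk.not_ge h.1

theorem qBinom_eq_zero_of_lt {m k : ℤ} (hmk : m < k) : qBinom q m k = 0 :=
  if_neg fun h => hmk.not_ge h.2

theorem qBinom_natCast {m k : ℕ} (hkm : k ≤ m) :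
    qBinom q m k = qPoch q q m / (qPoch q q k * qPoch q q (m - k)) := by
  rw [qBinom, if_pos ⟨k.cast_nonneg, by exact_mod_cast hkm⟩, ← Nat.cast_sub hkm]
  simp only [Int.toNat_natCast]

theorem qBinom_zero_right (hq : ∀ n : ℕ, q ^ (n + 1) ≠ 1) (m : ℕ) : qBinom q m 0 = 1 := by
  rw [← Nat.cast_zero, qBinom_natCast m.zero_le, qPoch_zero, one_mul, Nat.sub_zero,
    div_self (qPoch_ne_zero hq m)]

theorem qBinom_self (hq : ∀ n : ℕ, q ^ (n + 1) ≠ 1) (m : ℕ) : qBinom q m m = 1 := by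
  rw [qBinom_natCast le_rfl, Nat.sub_self, qPoch_zero, mul_one,
    div_self (qPoch_ne_zero hq m)]

theorem qBinom_symm (m k : ℤ) : qBinom q m (m - k) = qBinom q m k := by
  unfold qBinom
  by_cases h : 0 ≤ k ∧ k ≤ m
  · rw [if_pos (by omega), if_pos h, sub_sub_cancel, mul_comm]
  · rw [if_neg (by omega), if_neg h]

theorem qBinom_succ (hq : ∀ n : ℕ, q ^ (n + 1) ≠ 1) (m : ℕ) (k : ℤ) :
    qBinom q (m + 1) k = q ^ ((m : ℤ) + 1 - k) * qBinom q m (k - 1) + qBinom q m k := by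
  obtain hk | rfl | ⟨j, rfl⟩ : k < 0 ∨ k = 0 ∨ ∃ j : ℕ, k = j + 1 := by
    rcases lt_trichotomy k 0 with h | h | h
    exacts [.inl h, .inr (.inl h), .inr (.inr ⟨(k - 1).toNat, by omega⟩)]
  · simp only [qBinom_eq_zero_of_neg hk, qBinom_eq_zero_of_neg (sub_neg.2 (hk.trans zero_lt_one)),
      mul_zero, add_zero]
  · rw [← Nat.cast_succ, qBinom_zero_right hq, qBinom_zero_right hq,
      qBinom_eq_zero_of_neg (by norm_num), mul_zero, zero_add]
  rw [add_sub_cancel_right]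
  obtain hjm | rfl | hmj := lt_trichotomy j m
  · -- with `m = j + u + 1` this is `1 - q^(m+1) = q^(u+1) (1 - q^(j+1)) + (1 - q^(u+1))`
    obtain ⟨u, rfl⟩ := Nat.exists_eq_add_of_lt hjm
    have h1 : (j : ℤ) + 1 = (j + 1 : ℕ) := by push_cast; ring
    have h2 : ((j + u + 1 : ℕ) : ℤ) + 1 = (j + u + 1 + 1 : ℕ) := by push_cast; ring
    have h3 : ((j + u + 1 + 1 : ℕ) : ℤ) - (j + 1 : ℕ) = (u + 1 : ℕ) := by push_cast; ring
    rw [h1, h2, h3, zpow_natCast, qBinom_natCast (by omega), qBinom_natCast (by omega),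
      qBinom_natCast (by omega), show j + u + 1 + 1 - (j + 1) = u + 1 by omega,
      show j + u + 1 - j = u + 1 by omega, show j + u + 1 - (j + 1) = u by omega,
      qPoch_self_succ (j + u + 1), qPoch_self_succ j, qPoch_self_succ u]
    have hj := qPoch_ne_zero hq j
    have hu := qPoch_ne_zero hq u
    have hj' := sub_ne_zero.2 (hq j).symm
    have hu' := sub_ne_zero.2 (hq u).symm
    field_simp
    ring
  · rw [← Nat.cast_succ, qBinom_self hq, qBinom_self hq, sub_self, zpow_zero, one_mul,
      qBinom_eq_zero_of_lt (by omega), add_zero]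
  · rw [qBinom_eq_zero_of_lt (by omega), qBinom_eq_zero_of_lt (by omega),
      qBinom_eq_zero_of_lt (by omega), mul_zero, add_zero]

theorem qBinom_mul_qBinom (hq : ∀ n : ℕ, q ^ (n + 1) ≠ 1) (m k j : ℤ) :
    qBinom q m k * qBinom q k j = qBinom q m j * qBinom q (m - j) (k - j) := by
  rcases lt_or_ge j 0 with hj | hj
  · rw [qBinom_eq_zero_of_neg hj, qBinom_eq_zero_of_neg hj, mul_zero, zero_mul]
  rcases lt_or_ge k j with hkj | hkj
  · rw [qBinom_eq_zero_of_lt hkj, qBinom_eq_zero_of_neg (sub_neg.2 hkj), mul_zero, mul_zero]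
  rcases lt_or_ge m k with hmk | hmk
  · rw [qBinom_eq_zero_of_lt hmk, qBinom_eq_zero_of_lt (sub_lt_sub_right hmk j), zero_mul,
      mul_zero]
  lift j to ℕ using hj
  lift k to ℕ using by omega
  lift m to ℕ using by omega
  norm_cast at hkj hmk
  rw [← Nat.cast_sub (hkj.trans hmk), ← Nat.cast_sub hkj, qBinom_natCast hmk, qBinom_natCast hkj,
    qBinom_natCast (hkj.trans hmk), qBinom_natCast (by omega), Nat.sub_sub_sub_cancel_right hkj]
  have hk := qPoch_ne_zero hq k
  have hmj := qPoch_ne_zero hq (m - j)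
  field_simp

theorem qBinom_zero_left (m : ℤ) : qBinom q 0 m = if m = 0 then 1 else 0 := by
  unfold qBinom
  split_ifs with h h' h' <;> first | omega | simp [h', qPoch_zero]

theorem qBinom_add_eq_sum (hq₀ : q ≠ 0) (hq : ∀ n : ℕ, q ^ (n + 1) ≠ 1) (M N : ℕ) (t : ℤ) :
    qBinom q (M + N) t =
      ∑ j ∈ range (M + 1), q ^ ((M - j : ℤ) * (t - j)) * qBinom q M j * qBinom q N (t - j) := by
  induction N generalizing t with
  | zero =>
    simp only [Nat.cast_zero, add_zero, qBinom_zero_left, sub_eq_zero, mul_ite, mul_one, mul_zero]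
    by_cases ht : 0 ≤ t ∧ t ≤ M
    · lift t to ℕ using ht.1
      rw [sum_eq_single_of_mem t (mem_range.2 (by omega)), if_pos rfl, sub_self, mul_zero,
        zpow_zero, one_mul]
      exact fun j _ hjt => if_neg (by exact_mod_cast hjt.symm)
    · rw [qBinom, if_neg ht]
      exact (sum_eq_zero fun j hj => if_neg (by have := mem_range.1 hj; omega)).symm
  | succ N ih =>
    rw [Nat.cast_succ, ← add_assoc, ← Nat.cast_add, qBinom_succ hq, Nat.cast_add, ih, ih,
      mul_sum, ← sum_add_distrib]
    refine sum_congr rfl fun j _ => ?_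
    have hexp : q ^ ((M + N + 1 - t : ℤ)) * q ^ ((M - j : ℤ) * (t - j - 1)) =
        q ^ ((M - j : ℤ) * (t - j)) * q ^ ((N + 1 - (t - j) : ℤ)) := by
      rw [← zpow_add₀ hq₀, ← zpow_add₀ hq₀]; ring_nf
    rw [qBinom_succ hq, sub_right_comm]
    linear_combination (qBinom q M j * qBinom q N (t - j - 1)) * hexp

theorem qBinom_add_eq_sum_of_subset (hq₀ : q ≠ 0) (hq : ∀ n : ℕ, q ^ (n + 1) ≠ 1) (M N : ℕ)
    (t : ℤ) {s : Finset ℕ} (hs : ∀ j ≤ M, t - N ≤ j → (j : ℤ) ≤ t → j ∈ s) :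
    qBinom q (M + N) t =
      ∑ j ∈ s, q ^ ((M - j : ℤ) * (t - j)) * qBinom q M j * qBinom q N (t - j) := by
  have hzero : ∀ j ∉ range (M + 1) ∩ s,
      q ^ ((M - j : ℤ) * (t - j)) * qBinom q M j * qBinom q N (t - j) = 0 := by
    intro j hj
    by_cases hjM : j ≤ M
    · have ht : t - j < 0 ∨ N < t - j := by
        by_contra! h
        exact hj (mem_inter.2 ⟨mem_range.2 (by omega), hs j hjM (by omega) (by omega)⟩)
      rcases ht with ht | ht
      · rw [qBinom_eq_zero_of_neg ht, mul_zero]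
      · rw [qBinom_eq_zero_of_lt ht, mul_zero]
    · rw [qBinom_eq_zero_of_lt (show (M : ℤ) < j by omega), mul_zero, zero_mul]
  rw [qBinom_add_eq_sum hq₀ hq, ← sum_subset inter_subset_left fun j _ hj => hzero j hj,
    sum_subset inter_subset_right fun j _ hj => hzero j hj]

theorem qBinom_add_eq_sum_shift (hq₀ : q ≠ 0) (hq : ∀ n : ℕ, q ^ (n + 1) ≠ 1) (M N n : ℕ)
    (t : ℤ) :
    qBinom q (M + N) t = ∑ j ∈ range (n + M + 1),
      q ^ ((n + M - j : ℤ) * (n + t - j)) * qBinom q M (j - n) * qBinom q N (n + t - j) := by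
  rw [add_assoc, sum_range_add, sum_eq_zero fun j hj => by
    rw [qBinom_eq_zero_of_neg (by have := mem_range.1 hj; omega), mul_zero, zero_mul],
    zero_add, qBinom_add_eq_sum hq₀ hq]
  refine sum_congr rfl fun j _ => ?_
  push_cast
  ring_nf

theorem qBinom_mul_qBinom_add_eq_sum (hq₀ : q ≠ 0) (hq : ∀ n : ℕ, q ^ (n + 1) ≠ 1)
    (m c : ℕ) {d k : ℕ} (hdk : d ≤ k) (s : ℤ) :
    qBinom q c (k - d) * qBinom q (m + k) s = ∑ j ∈ range (m + d + 1),
      q ^ ((m + d - j : ℤ) * (s - j)) * qBinom q (m + d) j * qBinom q c (s - j) *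
        qBinom q (c - s + j) (c + d - k) := by
  obtain ⟨n, rfl⟩ := Nat.exists_eq_add_of_le hdk
  have hmn : (m + (d + n : ℕ) : ℤ) = (m + d : ℕ) + n := by push_cast; ring
  rw [hmn, qBinom_add_eq_sum hq₀ hq, mul_sum]
  refine sum_congr rfl fun j _ => ?_
  have h := qBinom_mul_qBinom hq c n (s - j)
  rw [← qBinom_symm (c - (s - j)), show (c - (s - j) - (n - (s - j)) : ℤ) = c + d - (d + n : ℕ) by
    push_cast; ring, show (c - (s - j) : ℤ) = c - s + j by ring] at h
  push_cast at h ⊢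
  rw [add_sub_cancel_left]
  linear_combination (q ^ ((m + d - j : ℤ) * (s - j)) * qBinom q (m + d) j) * h

theorem qBinom_mul_sum_Icc_eq (hq₀ : q ≠ 0) (hq : ∀ n : ℕ, q ^ (n + 1) ≠ 1) (M : ℤ)
    (b c d j : ℕ) :
    qBinom q M j * qBinom q c (b + c - j) * ∑ k ∈ Icc d (min b (c + d)),
      q ^ ((b - k : ℤ) * (c + d - k)) * qBinom q b k * qBinom q (j - b) (c + d - k) =
    qBinom q M (c + d) * qBinom q (M - (c + d)) (j - (c + d)) * qBinom q c (b + c - j) := by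
  by_cases hj : b ≤ j ∧ j ≤ b + c
  · obtain ⟨i, rfl⟩ := Nat.exists_eq_add_of_le hj.1
    have hs : ∀ k ≤ b, (c + d - i : ℤ) ≤ k → (k : ℤ) ≤ c + d → k ∈ Icc d (min b (c + d)) :=
      fun k hkb hk₁ hk₂ => mem_Icc.2 ⟨by omega, le_min hkb (by omega)⟩
    have h := qBinom_mul_qBinom hq M (b + i : ℕ) (c + d)
    push_cast at h ⊢
    rw [add_sub_cancel_left, ← qBinom_add_eq_sum_of_subset hq₀ hq b i (c + d) hs]
    linear_combination qBinom q c (b + c - (b + i)) * h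
  · have hc : qBinom q c (b + c - j) = 0 := by
      rcases not_and_or.1 hj with hj | hj
      · exact qBinom_eq_zero_of_lt (by omega)
      · exact qBinom_eq_zero_of_neg (by omega)
    rw [hc, mul_zero, zero_mul, mul_zero]

theorem sum_qBinom_mul_qBinom_mul_qBinom (hq₀ : q ≠ 0) (hq : ∀ n : ℕ, q ^ (n + 1) ≠ 1)
    (a b c d : ℕ) :
    ∑ k ∈ Icc d (min b (c + d)), q ^ ((b - k : ℤ) * (c + d - k)) * qBinom q b k *
        qBinom q c (k - d) * qBinom q (a + k) (b + c) =
      qBinom q a (b - d) * qBinom q (a + d) (c + d) := by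
  rcases lt_or_ge a c with hac | hca
  · rw [qBinom_eq_zero_of_lt (show (a + d : ℤ) < c + d by omega), mul_zero]
    refine sum_eq_zero fun k hk => ?_
    rw [qBinom_eq_zero_of_lt (show (a + k : ℤ) < b + c by have := mem_Icc.1 hk; omega), mul_zero]
  calc _ = ∑ k ∈ Icc d (min b (c + d)), ∑ j ∈ range (a + d + 1),
          q ^ ((a + d - j : ℤ) * (b + c - j)) * qBinom q (a + d) j * qBinom q c (b + c - j) *
            (q ^ ((b - k : ℤ) * (c + d - k)) * qBinom q b k * qBinom q (j - b) (c + d - k)) := by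
        refine sum_congr rfl fun k hk => ?_
        rw [mul_assoc _ (qBinom _ _ _), qBinom_mul_qBinom_add_eq_sum hq₀ hq _ _ (mem_Icc.1 hk).1,
          mul_sum]
        exact sum_congr rfl fun j _ => by ring_nf
    _ = ∑ j ∈ range (a + d + 1), q ^ ((a + d - j : ℤ) * (b + c - j)) *
          (qBinom q (a + d) j * qBinom q c (b + c - j) * ∑ k ∈ Icc d (min b (c + d)),
            q ^ ((b - k : ℤ) * (c + d - k)) * qBinom q b k * qBinom q (j - b) (c + d - k)) := by
        rw [sum_comm]
        refine sum_congr rfl fun j _ => ?_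
        simp only [mul_sum]
        exact sum_congr rfl fun k _ => by ring
    _ = _ := by
      simp only [qBinom_mul_sum_Icc_eq hq₀ hq]
      obtain ⟨e, rfl⟩ := Nat.exists_eq_add_of_le hca
      push_cast
      rw [show (c + e : ℤ) = e + c by ring, qBinom_add_eq_sum_shift hq₀ hq e c (c + d) (b - d),
        mul_comm, mul_sum]
      exact sum_congr (by ring_nf) fun j _ => by push_cast; ring_nf

end QBinom

theorem q_bizley_one (a b c d : ℕ) :
    ∑ k ∈ Finset.Icc d (min b (c + d)),
      (RatFunc.X : RatFunc ℚ) ^ (((b : ℤ) - k) * ((c : ℤ) + d - k)) *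
        qBinom RatFunc.X (b : ℤ) (k : ℤ) *
        qBinom RatFunc.X (c : ℤ) ((k : ℤ) - d) *
        qBinom RatFunc.X ((a : ℤ) + k) ((b : ℤ) + c)
    = qBinom RatFunc.X (a : ℤ) ((b : ℤ) - d) *
        qBinom RatFunc.X ((a : ℤ) + d) ((c : ℤ) + d) :=
  sum_qBinom_mul_qBinom_mul_qBinom RatFunc.X_ne_zero RatFunc.X_pow_succ_ne_one a b c d
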